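/- Let p₁ be a probability density on ℝ^d with finite first moment ∫ ‖x₁‖ p₁(x₁) dx₁ < ∞. Then for every compactly supported continuously differentiable function h: ℝ^d → ℝ and every t ∈ (0,1), the map s ↦ ∫ h(x) f_s(x) dx is differentiable at t and d/dt ∫ h(x) f_t(x) dx = ∫ ⟨∇h(x), v(x, t)⟩ f_t(x) dx; that is, the pair (f_t, v) satisfies the continuity equation in the weak (distributional) sense on ℝ^d × (0,1). -/

import Mathlib

open MeasureTheory Real
open scoped RealInnerProductSpace

/-- The Gaussian interpolation kernel `φ_t(x, x₁)`, i.e. the density of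
`N(t x₁, (1-t)² I_d)` evaluated at `x`. -/
noncomputable def phi (d : ℕ) (t : ℝ) (x x₁ : EuclideanSpace ℝ (Fin d)) : ℝ :=
  (2 * π * (1 - t) ^ 2) ^ (-(d : ℝ) / 2) * Real.exp (-‖x - t • x₁‖ ^ 2 / (2 * (1 - t) ^ 2))

/-- The marginal density `f_t^q(x) = ∫ φ_t(x, x₁) q(x₁) dx₁`. -/
noncomputable def fMarg (d : ℕ) (q : EuclideanSpace ℝ (Fin d) → ℝ) (t : ℝ)
    (x : EuclideanSpace ℝ (Fin d)) : ℝ :=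
  ∫ x₁, phi d t x x₁ * q x₁

/-- The flow-matching velocity field
`v^q(x, t) = (1/((1−t) f_t^q(x))) ∫ (x₁ − x) φ_t(x, x₁) q(x₁) dx₁`. -/
noncomputable def vField (d : ℕ) (q : EuclideanSpace ℝ (Fin d) → ℝ) (t : ℝ)
    (x : EuclideanSpace ℝ (Fin d)) : EuclideanSpace ℝ (Fin d) :=
  ((1 - t) * fMarg d q t x)⁻¹ • ∫ x₁, (phi d t x x₁ * q x₁) • (x₁ - x)

/-! ### Auxiliary definitions and lemmas -/

/-- The standard Gaussian density on `ℝ^d`. -/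
noncomputable def gaussFn (d : ℕ) (x : EuclideanSpace ℝ (Fin d)) : ℝ :=
  (2 * π) ^ (-(d : ℝ) / 2) * Real.exp (-‖x‖ ^ 2 / 2)

lemma gaussFn_pos {d : ℕ} (x : EuclideanSpace ℝ (Fin d)) : 0 < gaussFn d x := by
  unfold gaussFn; positivity

lemma gaussFn_continuous {d : ℕ} : Continuous (gaussFn d) := by
  unfold gaussFn; fun_prop

lemma integrable_exp_neg_mul_sq_norm {d : ℕ} {a : ℝ} (ha : 0 < a) :
    Integrable (fun x : EuclideanSpace ℝ (Fin d) => Real.exp (-a * ‖x‖ ^ 2)) := by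
  have h := GaussianFourier.integrable_cexp_neg_mul_sq_norm_add
    (V := EuclideanSpace ℝ (Fin d)) (b := (a : ℂ)) (by simpa using ha) 0 0
  refine h.norm.congr ?_
  filter_upwards with x
  simp [Complex.norm_exp]
  left; rw [← Complex.ofReal_pow, Complex.ofReal_re]

lemma integrable_gaussFn {d : ℕ} : Integrable (gaussFn d) := by
  unfold gaussFn
  refine (((integrable_exp_neg_mul_sq_norm (d := d) (a := (1:ℝ)/2) (by norm_num)).const_mul
    ((2 * π) ^ (-(d : ℝ) / 2))).congr ?_ : _)
  filter_upwards with x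
  ring_nf

lemma aux_r_exp (r : ℝ) (hr : 0 ≤ r) : r * Real.exp (-r ^ 2 / 4) ≤ 2 := by
  rcases le_or_gt r 2 with h | h
  · have h1 : Real.exp (-r ^ 2 / 4) ≤ 1 := by
      rw [Real.exp_le_one_iff]
      nlinarith
    nlinarith [Real.exp_pos (-r ^ 2 / 4)]
  · have h1 : r ^ 2 / 4 ≤ Real.exp (r ^ 2 / 4) := by
      nlinarith [Real.add_one_le_exp (r ^ 2 / 4)]
    have h2 : Real.exp (-r ^ 2 / 4) ≤ 4 / r ^ 2 := by
      rw [show -r ^ 2 / 4 = -(r ^ 2 / 4) by ring, Real.exp_neg]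
      have := inv_anti₀ (show (0:ℝ) < r ^ 2 / 4 by positivity) h1
      calc (Real.exp (r ^ 2 / 4))⁻¹ ≤ (r ^ 2 / 4)⁻¹ := this
        _ = 4 / r ^ 2 := by field_simp
    have h3 : r * Real.exp (-r ^ 2 / 4) ≤ r * (4 / r ^ 2) := by
      apply mul_le_mul_of_nonneg_left h2 hr
    have h4 : r * (4 / r ^ 2) = 4 / r := by field_simp
    have h5 : 4 / r ≤ 2 := by rw [div_le_iff₀ (by linarith)]; nlinarith
    linarith [h3, h4 ▸ h3]

lemma integrable_norm_gaussFn {d : ℕ} :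
    Integrable (fun x : EuclideanSpace ℝ (Fin d) => ‖x‖ * gaussFn d x) := by
  have hint : Integrable (fun x : EuclideanSpace ℝ (Fin d) =>
      (2 * π) ^ (-(d : ℝ) / 2) * (2 * Real.exp (-(1/4 : ℝ) * ‖x‖ ^ 2))) :=
    ((integrable_exp_neg_mul_sq_norm (by norm_num)).const_mul 2).const_mul _
  refine hint.mono' (Continuous.aestronglyMeasurable (by unfold gaussFn; fun_prop)) ?_
  filter_upwards with x
  have h0 : (0:ℝ) ≤ (2 * π) ^ (-(d : ℝ) / 2) := by positivity
  have key : ‖x‖ * Real.exp (-‖x‖ ^ 2 / 2) ≤ 2 * Real.exp (-(1/4 : ℝ) * ‖x‖ ^ 2) := by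
    have e1 : Real.exp (-‖x‖ ^ 2 / 2) = Real.exp (-‖x‖ ^ 2 / 4) * Real.exp (-(1/4:ℝ) * ‖x‖ ^ 2) := by
      rw [← Real.exp_add]; ring_nf
    rw [e1, ← mul_assoc]
    have := aux_r_exp ‖x‖ (norm_nonneg x)
    have he : (0:ℝ) ≤ Real.exp (-(1/4:ℝ) * ‖x‖ ^ 2) := (Real.exp_pos _).le
    nlinarith
  have hval : ‖‖x‖ * gaussFn d x‖ = ‖x‖ * gaussFn d x := by
    have : 0 < gaussFn d x := by unfold gaussFn; positivity
    rw [Real.norm_eq_abs, abs_of_nonneg (by positivity)]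
  rw [hval]
  unfold gaussFn
  calc ‖x‖ * ((2 * π) ^ (-(d : ℝ) / 2) * Real.exp (-‖x‖ ^ 2 / 2))
      = (2 * π) ^ (-(d : ℝ) / 2) * (‖x‖ * Real.exp (-‖x‖ ^ 2 / 2)) := by ring
    _ ≤ (2 * π) ^ (-(d : ℝ) / 2) * (2 * Real.exp (-(1/4 : ℝ) * ‖x‖ ^ 2)) := by
        exact mul_le_mul_of_nonneg_left key h0

lemma phi_eq {d : ℕ} {s : ℝ} (hs : 0 < 1 - s) (x x₁ : EuclideanSpace ℝ (Fin d)) :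
    phi d s x x₁ = ((1 - s)⁻¹) ^ d * gaussFn d ((1 - s)⁻¹ • (x - s • x₁)) := by
  set c : ℝ := 1 - s with hc
  have hc0 : c ≠ 0 := ne_of_gt hs
  unfold phi gaussFn
  have h1 : (2 * π * c ^ 2) ^ (-(d : ℝ) / 2) = c⁻¹ ^ d * (2 * π) ^ (-(d : ℝ) / 2) := by
    rw [Real.mul_rpow (by positivity) (by positivity)]
    have h2 : ((c ^ 2 : ℝ)) ^ (-(d : ℝ) / 2) = c⁻¹ ^ d := by
      rw [show (c ^ 2 : ℝ) = c ^ ((2 : ℕ) : ℝ) by rw [Real.rpow_natCast],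
        ← Real.rpow_mul hs.le]
      rw [show ((2 : ℕ) : ℝ) * (-(d : ℝ) / 2) = -(d : ℝ) by push_cast; ring]
      rw [Real.rpow_neg hs.le, Real.rpow_natCast, inv_pow]
    rw [h2]; ring
  have h3 : ‖c⁻¹ • (x - s • x₁)‖ ^ 2 = ‖x - s • x₁‖ ^ 2 / c ^ 2 := by
    rw [norm_smul]
    have : ‖(c⁻¹ : ℝ)‖ = c⁻¹ := by
      rw [Real.norm_eq_abs, abs_of_pos (by positivity)]
    rw [this]
    field_simp
  have h4 : Real.exp (-‖x - s • x₁‖ ^ 2 / (2 * c ^ 2))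
      = Real.exp (-(‖x - s • x₁‖ ^ 2 / c ^ 2) / 2) := by
    congr 1
    field_simp
  rw [h1, h3, h4]
  ring

lemma phi_pos {d : ℕ} {s : ℝ} (hs : 0 < 1 - s) (x x₁ : EuclideanSpace ℝ (Fin d)) :
    0 < phi d s x x₁ := by
  rw [phi_eq hs]
  have := gaussFn_pos (d := d) ((1 - s)⁻¹ • (x - s • x₁))
  positivity

lemma phi_le {d : ℕ} {s : ℝ} (hs : 0 < 1 - s) (x x₁ : EuclideanSpace ℝ (Fin d)) :
    phi d s x x₁ ≤ (2 * π * (1 - s) ^ 2) ^ (-(d : ℝ) / 2) := by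
  unfold phi
  have h1 : Real.exp (-‖x - s • x₁‖ ^ 2 / (2 * (1 - s) ^ 2)) ≤ 1 := by
    rw [Real.exp_le_one_iff]
    apply div_nonpos_of_nonpos_of_nonneg
    · simp only [neg_nonpos]; positivity
    · positivity
  nlinarith [Real.rpow_pos_of_pos (by positivity : (0:ℝ) < 2 * π * (1 - s) ^ 2) (-(d:ℝ)/2)]

lemma phi_continuous {d : ℕ} {s : ℝ} :
    Continuous (fun p : EuclideanSpace ℝ (Fin d) × EuclideanSpace ℝ (Fin d) =>
      phi d s p.1 p.2) := by
  unfold phi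
  fun_prop

/-- Change of variables `x = x₀ + s • (x₁ - x₀)`. -/
lemma integral_mul_phi_eq {d : ℕ} {s : ℝ} (hs : 0 < 1 - s)
    (g : EuclideanSpace ℝ (Fin d) → ℝ) (x₁ : EuclideanSpace ℝ (Fin d)) :
    ∫ x, g x * phi d s x x₁ = ∫ x₀, g (x₀ + s • (x₁ - x₀)) * gaussFn d x₀ := by
  set c : ℝ := 1 - s with hc
  have hc0 : c ≠ 0 := ne_of_gt hs
  have step1 : ∫ x, g x * phi d s x x₁
      = ∫ y, g (y + s • x₁) * (c⁻¹ ^ d * gaussFn d (c⁻¹ • y)) := by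
    rw [← integral_add_right_eq_self (fun x => g x * phi d s x x₁) (s • x₁)]
    congr 1
    ext y
    rw [phi_eq hs, add_sub_cancel_right]
  rw [step1]
  have step2 := Measure.integral_comp_smul_of_nonneg (μ := (volume : Measure (EuclideanSpace ℝ (Fin d))))
    (fun y => g (y + s • x₁) * (c⁻¹ ^ d * gaussFn d (c⁻¹ • y))) c (hR := hs.le)
  rw [finrank_euclideanSpace_fin] at step2
  have hcd : (c ^ d : ℝ) ≠ 0 := pow_ne_zero _ hc0
  have step3 : ∫ y, g (y + s • x₁) * (c⁻¹ ^ d * gaussFn d (c⁻¹ • y))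
      = c ^ d • ∫ x₀, g (c • x₀ + s • x₁) * (c⁻¹ ^ d * gaussFn d (c⁻¹ • (c • x₀))) := by
    rw [step2, smul_smul, mul_inv_cancel₀ hcd, one_smul]
  rw [step3, ← integral_smul]
  congr 1
  ext x₀
  rw [inv_smul_smul₀ hc0]
  have hpt : c • x₀ + s • x₁ = x₀ + s • (x₁ - x₀) := by
    rw [hc]; module
  rw [hpt]
  simp only [smul_eq_mul]
  have : (c ^ d : ℝ) * (c⁻¹ ^ d) = 1 := by
    rw [← mul_pow, mul_inv_cancel₀ hc0, one_pow]
  calc c ^ d * (g (x₀ + s • (x₁ - x₀)) * (c⁻¹ ^ d * gaussFn d x₀))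
      = (c ^ d * c⁻¹ ^ d) * (g (x₀ + s • (x₁ - x₀)) * gaussFn d x₀) := by ring
    _ = g (x₀ + s • (x₁ - x₀)) * gaussFn d x₀ := by rw [this, one_mul]


-- extra helper lemmas for the main theorem

lemma phi_continuous' {d : ℕ} {s : ℝ} (x : EuclideanSpace ℝ (Fin d)) :
    Continuous (fun x₁ => phi d s x x₁) := by
  unfold phi
  fun_prop

lemma gaussFn_measurable {d : ℕ} : Measurable (gaussFn d) :=
  gaussFn_continuous.measurable

set_option maxHeartbeats 2000000 in
/-- If `p₁` is a probability density on `ℝ^d` with finite first moment,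
then for every compactly supported `C¹` test function `h` and every `t ∈ (0,1)`, the map
`s ↦ ∫ h(x) f_s(x) dx` is differentiable at `t` with derivative
`∫ ⟨∇h(x), v(x,t)⟩ f_t(x) dx`, i.e. `(f_t, v)` satisfies the continuity equation in the
weak sense. -/
theorem stmt5 (d : ℕ) (hd : 1 ≤ d)
    (p₁ : EuclideanSpace ℝ (Fin d) → ℝ)
    (hp₁_meas : Measurable p₁) (hp₁_nonneg : ∀ x, 0 ≤ p₁ x)
    (hp₁_int : ∫ x, p₁ x = 1)
    (hmom : Integrable (fun x₁ : EuclideanSpace ℝ (Fin d) => ‖x₁‖ * p₁ x₁)) :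
    ∀ h : EuclideanSpace ℝ (Fin d) → ℝ, ContDiff ℝ 1 h → HasCompactSupport h →
      ∀ t ∈ Set.Ioo (0 : ℝ) 1,
        HasDerivAt (fun s => ∫ x, h x * fMarg d p₁ s x)
          (∫ x, ⟪gradient h x, vField d p₁ t x⟫ * fMarg d p₁ t x) t := by
  intro h hC1 hsupp t ht
  obtain ⟨ht0, ht1⟩ := ht
  have htc : 0 < 1 - t := by linarith
  have hp₁_int' : Integrable p₁ := by
    by_contra hni
    rw [integral_undef hni] at hp₁_int
    norm_num at hp₁_int
  have hhcont : Continuous h := hC1.continuous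
  have hhdiff : Differentiable ℝ h := hC1.differentiable one_ne_zero
  obtain ⟨M, hM⟩ := hsupp.exists_bound_of_continuous hhcont
  have hgrad_cont : Continuous (fun x => gradient h x) := by
    have h1 : Continuous (fderiv ℝ h) := hC1.continuous_fderiv one_ne_zero
    exact (InnerProductSpace.toDual ℝ _).symm.continuous.comp h1
  have hgrad_supp : HasCompactSupport (fun x => gradient h x) := by
    have hf : HasCompactSupport (fderiv ℝ h) := hsupp.fderiv (𝕜 := ℝ)
    exact hf.comp_left (g := fun L => (InnerProductSpace.toDual ℝ
      (EuclideanSpace ℝ (Fin d))).symm L) (by simp)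
  obtain ⟨C, hC⟩ := hgrad_supp.exists_bound_of_continuous hgrad_cont
  have hC0 : 0 ≤ C := le_trans (norm_nonneg _) (hC 0)
  have hgrad_inner : ∀ x y, ⟪gradient h x, y⟫ = fderiv ℝ h x y := fun x y => by
    rw [gradient]
    exact InnerProductSpace.toDual_symm_apply
  have hgrad0 : ∀ x, x ∉ tsupport h → gradient h x = 0 := by
    intro x hx
    have h0 : fderiv ℝ h x = 0 := fderiv_of_notMem_tsupport (𝕜 := ℝ) hx
    rw [gradient, h0, map_zero]
  set μ : Measure (EuclideanSpace ℝ (Fin d) × EuclideanSpace ℝ (Fin d)) :=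
    (volume : Measure (EuclideanSpace ℝ (Fin d))).prod volume with hμ
  set F : ℝ → EuclideanSpace ℝ (Fin d) × EuclideanSpace ℝ (Fin d) → ℝ :=
    fun s a => h (a.1 + s • (a.2 - a.1)) * (gaussFn d a.1 * p₁ a.2) with hF
  set F' : ℝ → EuclideanSpace ℝ (Fin d) × EuclideanSpace ℝ (Fin d) → ℝ := fun s a =>
    ⟪gradient h (a.1 + s • (a.2 - a.1)), a.2 - a.1⟫ * (gaussFn d a.1 * p₁ a.2) with hF'
  have hGp_meas : Measurable (fun a : EuclideanSpace ℝ (Fin d) × EuclideanSpace ℝ (Fin d) =>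
      gaussFn d a.1 * p₁ a.2) :=
    (gaussFn_measurable.comp measurable_fst).mul (hp₁_meas.comp measurable_snd)
  have hGp_nonneg : ∀ a : EuclideanSpace ℝ (Fin d) × EuclideanSpace ℝ (Fin d),
      0 ≤ gaussFn d a.1 * p₁ a.2 :=
    fun a => mul_nonneg (gaussFn_pos a.1).le (hp₁_nonneg a.2)
  have hFmeas : ∀ s : ℝ, AEStronglyMeasurable (F s) μ := by
    intro s
    apply Measurable.aestronglyMeasurable
    exact (hhcont.measurable.comp (by fun_prop)).mul hGp_meas
  have hF'meas : ∀ s : ℝ, AEStronglyMeasurable (F' s) μ := by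
    intro s
    apply Measurable.aestronglyMeasurable
    refine Measurable.mul ?_ hGp_meas
    apply Continuous.measurable
    exact Continuous.inner (hgrad_cont.comp (by fun_prop)) (by fun_prop)
  have hGp_int : Integrable (fun a : EuclideanSpace ℝ (Fin d) × EuclideanSpace ℝ (Fin d) =>
      gaussFn d a.1 * p₁ a.2) μ := integrable_gaussFn.mul_prod hp₁_int'
  have hFint : ∀ s : ℝ, Integrable (F s) μ := by
    intro s
    refine (hGp_int.const_mul M).mono' (hFmeas s) ?_
    filter_upwards with a
    simp only [hF, norm_mul]
    rw [Real.norm_eq_abs (gaussFn d a.1), Real.norm_eq_abs (p₁ a.2),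
      abs_of_nonneg (gaussFn_pos a.1).le, abs_of_nonneg (hp₁_nonneg a.2)]
    exact mul_le_mul_of_nonneg_right (hM _) (hGp_nonneg a)
  set bound : EuclideanSpace ℝ (Fin d) × EuclideanSpace ℝ (Fin d) → ℝ := fun a =>
    C * ((‖a.1‖ * gaussFn d a.1) * p₁ a.2 + gaussFn d a.1 * (‖a.2‖ * p₁ a.2)) with hbound
  have hbound_int : Integrable bound μ :=
    ((integrable_norm_gaussFn.mul_prod hp₁_int').add (integrable_gaussFn.mul_prod hmom)).const_mul C
  have h_bound : ∀ᵐ a ∂μ, ∀ s ∈ Metric.ball t 1, ‖F' s a‖ ≤ bound a := by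
    filter_upwards with a s _
    simp only [hF', hbound, norm_mul]
    rw [Real.norm_eq_abs (gaussFn d a.1), Real.norm_eq_abs (p₁ a.2),
      abs_of_nonneg (gaussFn_pos a.1).le, abs_of_nonneg (hp₁_nonneg a.2)]
    have h1 : ‖⟪gradient h (a.1 + s • (a.2 - a.1)), a.2 - a.1⟫‖ ≤ C * (‖a.1‖ + ‖a.2‖) := by
      calc ‖⟪gradient h (a.1 + s • (a.2 - a.1)), a.2 - a.1⟫‖
          ≤ ‖gradient h (a.1 + s • (a.2 - a.1))‖ * ‖a.2 - a.1‖ := norm_inner_le_norm _ _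
        _ ≤ C * (‖a.1‖ + ‖a.2‖) := by
            have h2 : ‖a.2 - a.1‖ ≤ ‖a.1‖ + ‖a.2‖ := by
              calc ‖a.2 - a.1‖ ≤ ‖a.2‖ + ‖a.1‖ := norm_sub_le _ _
                _ = ‖a.1‖ + ‖a.2‖ := by ring
            exact mul_le_mul (hC _) h2 (norm_nonneg _) hC0
    calc ‖⟪gradient h (a.1 + s • (a.2 - a.1)), a.2 - a.1⟫‖ * (gaussFn d a.1 * p₁ a.2)
        ≤ (C * (‖a.1‖ + ‖a.2‖)) * (gaussFn d a.1 * p₁ a.2) :=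
          mul_le_mul_of_nonneg_right h1 (hGp_nonneg a)
      _ = C * ((‖a.1‖ * gaussFn d a.1) * p₁ a.2 + gaussFn d a.1 * (‖a.2‖ * p₁ a.2)) := by ring
  have h_diff : ∀ᵐ a ∂μ, ∀ s ∈ Metric.ball t 1, HasDerivAt (fun s => F s a) (F' s a) s := by
    filter_upwards with a s _
    have hc : HasDerivAt (fun s : ℝ => a.1 + s • (a.2 - a.1)) (a.2 - a.1) s := by
      simpa using ((hasDerivAt_id s).smul_const (a.2 - a.1)).const_add a.1
    have hd := (hhdiff (a.1 + s • (a.2 - a.1))).hasFDerivAt.comp_hasDerivAt s hc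
    have hd2 := hd.mul_const (gaussFn d a.1 * p₁ a.2)
    have : F' s a = fderiv ℝ h (a.1 + s • (a.2 - a.1)) (a.2 - a.1) * (gaussFn d a.1 * p₁ a.2) := by
      simp only [hF']
      rw [hgrad_inner]
    rw [this]
    exact hd2
  obtain ⟨hF'int, hderiv⟩ := hasDerivAt_integral_of_dominated_loc_of_deriv_le
    (Metric.ball_mem_nhds t one_pos) (Filter.Eventually.of_forall hFmeas) (hFint t) (hF'meas t) h_bound hbound_int h_diff
  have claimA : ∀ s ∈ Set.Ioo (0:ℝ) 1, ∫ x, h x * fMarg d p₁ s x = ∫ a, F s a ∂μ := by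
    rintro s ⟨hs0, hs1⟩
    have hsc : 0 < 1 - s := by linarith
    set Cs : ℝ := (2 * π * (1 - s) ^ 2) ^ (-(d : ℝ) / 2) with hCs
    have hk_meas : AEStronglyMeasurable
        (fun a : EuclideanSpace ℝ (Fin d) × EuclideanSpace ℝ (Fin d) =>
          h a.1 * (phi d s a.1 a.2 * p₁ a.2)) μ := by
      apply Measurable.aestronglyMeasurable
      exact ((hhcont.comp continuous_fst).measurable).mul
        ((phi_continuous.measurable).mul (hp₁_meas.comp measurable_snd))
    have hInd : Integrable (fun x : EuclideanSpace ℝ (Fin d) =>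
        Set.indicator (tsupport h) (fun _ => M * Cs) x) volume := by
      rw [integrable_indicator_iff (isClosed_tsupport h).measurableSet]
      exact integrableOn_const hsupp.measure_lt_top.ne
    have hk_int : Integrable (fun a : EuclideanSpace ℝ (Fin d) × EuclideanSpace ℝ (Fin d) =>
        h a.1 * (phi d s a.1 a.2 * p₁ a.2)) μ := by
      refine (hInd.mul_prod hp₁_int').mono' hk_meas ?_
      filter_upwards with a
      rw [norm_mul, norm_mul]
      rw [Real.norm_eq_abs (phi d s a.1 a.2), Real.norm_eq_abs (p₁ a.2),
        abs_of_nonneg (phi_pos hsc _ _).le, abs_of_nonneg (hp₁_nonneg _)]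
      by_cases hx : a.1 ∈ tsupport h
      · rw [Set.indicator_of_mem hx]
        calc ‖h a.1‖ * (phi d s a.1 a.2 * p₁ a.2)
            ≤ M * (Cs * p₁ a.2) := by
              apply mul_le_mul (hM _) ?_ (mul_nonneg (phi_pos hsc _ _).le (hp₁_nonneg _)) ?_
              · exact mul_le_mul_of_nonneg_right (phi_le hsc _ _) (hp₁_nonneg _)
              · exact le_trans (norm_nonneg _) (hM 0)
          _ = M * Cs * p₁ a.2 := by ring
      · rw [Set.indicator_of_notMem hx, image_eq_zero_of_notMem_tsupport hx]
        simp [mul_nonneg, (phi_pos hsc (a.1) (a.2)).le, hp₁_nonneg]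
    calc ∫ x, h x * fMarg d p₁ s x
        = ∫ x, ∫ x₁, h x * (phi d s x x₁ * p₁ x₁) := by
          refine integral_congr_ae (Filter.Eventually.of_forall fun x => ?_)
          dsimp only
          rw [show fMarg d p₁ s x = ∫ x₁, phi d s x x₁ * p₁ x₁ from rfl, integral_const_mul]
      _ = ∫ a, h a.1 * (phi d s a.1 a.2 * p₁ a.2) ∂μ := integral_integral hk_int
      _ = ∫ x₁, ∫ x, h x * (phi d s x x₁ * p₁ x₁) := integral_prod_symm _ hk_int
      _ = ∫ x₁, (∫ x, h x * phi d s x x₁) * p₁ x₁ := by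
          refine integral_congr_ae (Filter.Eventually.of_forall fun x₁ => ?_)
          dsimp only
          rw [← integral_mul_const]
          refine integral_congr_ae (Filter.Eventually.of_forall fun x => ?_)
          dsimp only
          ring
      _ = ∫ x₁, (∫ x₀, h (x₀ + s • (x₁ - x₀)) * gaussFn d x₀) * p₁ x₁ := by
          refine integral_congr_ae (Filter.Eventually.of_forall fun x₁ => ?_)
          dsimp only
          rw [integral_mul_phi_eq hsc]
      _ = ∫ x₁, ∫ x₀, F s (x₀, x₁) := by
          refine integral_congr_ae (Filter.Eventually.of_forall fun x₁ => ?_)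
          dsimp only
          rw [← integral_mul_const]
          refine integral_congr_ae (Filter.Eventually.of_forall fun x₀ => ?_)
          simp only [hF]
          ring
      _ = ∫ a, F s a ∂μ := (integral_prod_symm _ (hFint s)).symm
  have claimB : ∫ x, ⟪gradient h x, vField d p₁ t x⟫ * fMarg d p₁ t x = ∫ a, F' t a ∂μ := by
    set Ct : ℝ := (2 * π * (1 - t) ^ 2) ^ (-(d : ℝ) / 2) with hCt
    have hCt0 : 0 < Ct := Real.rpow_pos_of_pos (by positivity) _
    have hphi_int : ∀ x, Integrable (fun x₁ => phi d t x x₁ * p₁ x₁) := by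
      intro x
      refine (hp₁_int'.const_mul Ct).mono'
        (((phi_continuous' x).measurable.mul hp₁_meas).aestronglyMeasurable) ?_
      filter_upwards with x₁
      rw [norm_mul, Real.norm_eq_abs (phi d t x x₁), Real.norm_eq_abs (p₁ x₁),
        abs_of_nonneg (phi_pos htc _ _).le, abs_of_nonneg (hp₁_nonneg _)]
      exact mul_le_mul_of_nonneg_right (phi_le htc x x₁) (hp₁_nonneg x₁)
    have hsupp_pos : 0 < volume (Function.support p₁) := by
      rcases eq_or_lt_of_le (zero_le : (0 : ENNReal) ≤ volume (Function.support p₁)) with hz | hlt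
      · exfalso
        have hae : ∀ᵐ x, p₁ x = 0 := by
          rw [ae_iff]
          have hset : {x | ¬ p₁ x = (0:ℝ)} = Function.support p₁ := rfl
          rw [hset, ← hz]
        have hz2 : ∫ x, p₁ x = 0 := integral_eq_zero_of_ae hae
        rw [hz2] at hp₁_int
        norm_num at hp₁_int
      · exact hlt
    have hf_pos : ∀ x, 0 < fMarg d p₁ t x := by
      intro x
      rw [show fMarg d p₁ t x = ∫ x₁, phi d t x x₁ * p₁ x₁ from rfl]
      rw [integral_pos_iff_support_of_nonneg
        (fun x₁ => mul_nonneg (phi_pos htc _ _).le (hp₁_nonneg _)) (hphi_int x)]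
      have hss : Function.support (fun x₁ => phi d t x x₁ * p₁ x₁) = Function.support p₁ := by
        ext x₁
        simp only [Function.mem_support, mul_ne_zero_iff]
        exact ⟨fun ⟨_, hb⟩ => hb, fun hb => ⟨(phi_pos htc x x₁).ne', hb⟩⟩
      rw [hss]
      exact hsupp_pos
    have hvec_int : ∀ x, Integrable (fun x₁ => (phi d t x x₁ * p₁ x₁) • (x₁ - x)) := by
      intro x
      have hm : AEStronglyMeasurable
          (fun x₁ : EuclideanSpace ℝ (Fin d) => (phi d t x x₁ * p₁ x₁) • (x₁ - x)) volume := by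
        apply Measurable.aestronglyMeasurable
        exact ((phi_continuous' x).measurable.mul hp₁_meas).smul
          ((continuous_id.sub continuous_const).measurable)
      refine ((hmom.add (hp₁_int'.const_mul ‖x‖)).const_mul Ct).mono' hm ?_
      filter_upwards with x₁
      rw [norm_smul, norm_mul, Real.norm_eq_abs (phi d t x x₁), Real.norm_eq_abs (p₁ x₁),
        abs_of_nonneg (phi_pos htc _ _).le, abs_of_nonneg (hp₁_nonneg _)]
      have h1 : ‖x₁ - x‖ ≤ ‖x₁‖ + ‖x‖ := norm_sub_le _ _
      have h2 := phi_le htc x x₁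
      have h3 := hp₁_nonneg x₁
      have h4 := (phi_pos htc x x₁).le
      have h5 : (0:ℝ) ≤ ‖x₁ - x‖ := norm_nonneg _
      calc phi d t x x₁ * p₁ x₁ * ‖x₁ - x‖
          ≤ Ct * p₁ x₁ * (‖x₁‖ + ‖x‖) := by
            apply mul_le_mul (mul_le_mul_of_nonneg_right h2 h3) h1 h5 (by positivity)
        _ = Ct * (‖x₁‖ * p₁ x₁ + ‖x‖ * p₁ x₁) := by ring
    have hpt : ∀ x, ⟪gradient h x, vField d p₁ t x⟫ * fMarg d p₁ t x
        = (1 - t)⁻¹ * ∫ x₁, ⟪gradient h x, x₁ - x⟫ * (phi d t x x₁ * p₁ x₁) := by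
      intro x
      have hfne : fMarg d p₁ t x ≠ 0 := (hf_pos x).ne'
      rw [show vField d p₁ t x = ((1 - t) * fMarg d p₁ t x)⁻¹ •
        ∫ x₁, (phi d t x x₁ * p₁ x₁) • (x₁ - x) from rfl]
      rw [real_inner_smul_right]
      rw [show ⟪gradient h x, ∫ x₁, (phi d t x x₁ * p₁ x₁) • (x₁ - x)⟫
          = ∫ x₁, ⟪gradient h x, (phi d t x x₁ * p₁ x₁) • (x₁ - x)⟫ from
        (integral_inner (hvec_int x) _).symm]
      have hre : (fun x₁ => ⟪gradient h x, (phi d t x x₁ * p₁ x₁) • (x₁ - x)⟫)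
          = fun x₁ => ⟪gradient h x, x₁ - x⟫ * (phi d t x x₁ * p₁ x₁) := by
        funext x₁
        rw [real_inner_smul_right]
        ring
      rw [hre, mul_inv]
      field_simp
    obtain ⟨R, hR⟩ := hsupp.exists_bound_of_continuousOn continuousOn_id
    set R₀ : ℝ := max R 0 with hR₀
    have hR₀0 : 0 ≤ R₀ := le_max_right _ _
    have hRK : ∀ x ∈ tsupport h, ‖x‖ ≤ R₀ := fun x hx => le_trans (hR x hx) (le_max_left _ _)
    have hmom' : Integrable (fun x₁ : EuclideanSpace ℝ (Fin d) => (R₀ + ‖x₁‖) * p₁ x₁) := by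
      have he : (fun x₁ : EuclideanSpace ℝ (Fin d) => (R₀ + ‖x₁‖) * p₁ x₁)
          = fun x₁ => R₀ * p₁ x₁ + ‖x₁‖ * p₁ x₁ := by
        funext x₁; ring
      rw [he]
      exact (hp₁_int'.const_mul R₀).add hmom
    have hInd2 : Integrable (fun x : EuclideanSpace ℝ (Fin d) =>
        Set.indicator (tsupport h) (fun _ => C * Ct) x) volume := by
      rw [integrable_indicator_iff (isClosed_tsupport h).measurableSet]
      exact integrableOn_const hsupp.measure_lt_top.ne
    have hswap_meas : AEStronglyMeasurable
        (fun a : EuclideanSpace ℝ (Fin d) × EuclideanSpace ℝ (Fin d) =>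
          ⟪gradient h a.1, a.2 - a.1⟫ * (phi d t a.1 a.2 * p₁ a.2)) μ := by
      apply Measurable.aestronglyMeasurable
      refine Measurable.mul ?_ ((phi_continuous.measurable).mul (hp₁_meas.comp measurable_snd))
      apply Continuous.measurable
      exact Continuous.inner (hgrad_cont.comp continuous_fst)
        (continuous_snd.sub continuous_fst)
    have hswap_int : Integrable
        (fun a : EuclideanSpace ℝ (Fin d) × EuclideanSpace ℝ (Fin d) =>
          ⟪gradient h a.1, a.2 - a.1⟫ * (phi d t a.1 a.2 * p₁ a.2)) μ := by
      refine (hInd2.mul_prod hmom').mono' hswap_meas ?_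
      filter_upwards with a
      rw [norm_mul, Real.norm_eq_abs (phi d t a.1 a.2 * p₁ a.2),
        abs_of_nonneg (mul_nonneg (phi_pos htc _ _).le (hp₁_nonneg _))]
      by_cases hx : a.1 ∈ tsupport h
      · rw [Set.indicator_of_mem hx]
        have h6 : ‖⟪gradient h a.1, a.2 - a.1⟫‖ ≤ C * (R₀ + ‖a.2‖) := by
          calc ‖⟪gradient h a.1, a.2 - a.1⟫‖ ≤ ‖gradient h a.1‖ * ‖a.2 - a.1‖ :=
              norm_inner_le_norm _ _
            _ ≤ C * (R₀ + ‖a.2‖) := by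
                apply mul_le_mul (hC _) ?_ (norm_nonneg _) hC0
                calc ‖a.2 - a.1‖ ≤ ‖a.2‖ + ‖a.1‖ := norm_sub_le _ _
                  _ ≤ R₀ + ‖a.2‖ := by
                      have := hRK _ hx
                      linarith
        have h7 : phi d t a.1 a.2 * p₁ a.2 ≤ Ct * p₁ a.2 :=
          mul_le_mul_of_nonneg_right (phi_le htc _ _) (hp₁_nonneg _)
        calc ‖⟪gradient h a.1, a.2 - a.1⟫‖ * (phi d t a.1 a.2 * p₁ a.2)
            ≤ (C * (R₀ + ‖a.2‖)) * (Ct * p₁ a.2) := by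
              apply mul_le_mul h6 h7 (mul_nonneg (phi_pos htc _ _).le (hp₁_nonneg _)) (by positivity)
          _ = C * Ct * ((R₀ + ‖a.2‖) * p₁ a.2) := by ring
      · rw [Set.indicator_of_notMem hx, hgrad0 _ hx]
        simp only [inner_zero_left, norm_zero, zero_mul]
        positivity
    calc ∫ x, ⟪gradient h x, vField d p₁ t x⟫ * fMarg d p₁ t x
        = ∫ x, (1 - t)⁻¹ * ∫ x₁, ⟪gradient h x, x₁ - x⟫ * (phi d t x x₁ * p₁ x₁) :=
          integral_congr_ae (Filter.Eventually.of_forall fun x => hpt x)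
      _ = (1 - t)⁻¹ * ∫ x, ∫ x₁, ⟪gradient h x, x₁ - x⟫ * (phi d t x x₁ * p₁ x₁) :=
          integral_const_mul _ _
      _ = (1 - t)⁻¹ * ∫ x₁, ∫ x, ⟪gradient h x, x₁ - x⟫ * (phi d t x x₁ * p₁ x₁) := by
          rw [integral_integral hswap_int, integral_prod_symm _ hswap_int]
      _ = (1 - t)⁻¹ * ∫ x₁, (1 - t) * ((∫ x₀, ⟪gradient h (x₀ + t • (x₁ - x₀)), x₁ - x₀⟫
            * gaussFn d x₀) * p₁ x₁) := by
          congr 1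
          refine integral_congr_ae (Filter.Eventually.of_forall fun x₁ => ?_)
          dsimp only
          have e1 : (fun x => ⟪gradient h x, x₁ - x⟫ * (phi d t x x₁ * p₁ x₁))
              = fun x => (⟪gradient h x, x₁ - x⟫ * phi d t x x₁) * p₁ x₁ := by
            funext x; ring
          rw [e1, integral_mul_const,
            integral_mul_phi_eq htc (fun x => ⟪gradient h x, x₁ - x⟫) x₁]
          have e2 : (fun x₀ => ⟪gradient h (x₀ + t • (x₁ - x₀)), x₁ - (x₀ + t • (x₁ - x₀))⟫
              * gaussFn d x₀)
              = fun x₀ => (1 - t) * (⟪gradient h (x₀ + t • (x₁ - x₀)), x₁ - x₀⟫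
                * gaussFn d x₀) := by
            funext x₀
            have e3 : x₁ - (x₀ + t • (x₁ - x₀)) = (1 - t) • (x₁ - x₀) := by module
            rw [e3, real_inner_smul_right]
            ring
          rw [e2, integral_const_mul]
          ring
      _ = ∫ x₁, (∫ x₀, ⟪gradient h (x₀ + t • (x₁ - x₀)), x₁ - x₀⟫ * gaussFn d x₀) * p₁ x₁ := by
          rw [integral_const_mul, ← mul_assoc, inv_mul_cancel₀ (ne_of_gt htc), one_mul]
      _ = ∫ x₁, ∫ x₀, F' t (x₀, x₁) := by
          refine integral_congr_ae (Filter.Eventually.of_forall fun x₁ => ?_)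
          dsimp only
          rw [← integral_mul_const]
          refine integral_congr_ae (Filter.Eventually.of_forall fun x₀ => ?_)
          simp only [hF']
          ring
      _ = ∫ a, F' t a ∂μ := (integral_prod_symm _ hF'int).symm
  rw [claimB]
  apply hderiv.congr_of_eventuallyEq
  filter_upwards [Ioo_mem_nhds ht0 ht1] with s hs
  exact claimA s hs
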